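/- arXiv:2404.11396 — 2 statements merged into one kernel-verified Lean document; each statement's English description precedes it below -/
import Mathlib

section
/- Let C₀ ≥ 1 and let H, h : (0,2] → [0,∞) satisfy for every r ∈ (0,1]: H(t) ≤ C₀H(2r) for all t ∈ [r,2r], and |h(t) - h(s)| ≤ C₀H(2r) for all t, s ∈ [r,2r]. Then there is a constant C depending only on C₀ such that for all a ∈ (0,2]: h(a) + H(a) ≤ C(H(2) + h(2) + ∫_a^2 H(s)/s ds). -/
open MeasureTheory intervalIntegral

/-- Dyadic summation lemma from the Campanato scheme. If `H, h` on
`(0,2]` are nonnegative, `H` has the doubling property and `h` oscillates by at most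
`C₀ H(2r)` on each dyadic interval `[r, 2r]`, then
`h(a) + H(a) ≤ C (H(2) + h(2) + ∫_a^2 H(s)/s ds)` for all `a ∈ (0,2]`,
with `C = C(C₀)`. -/
theorem statement10
    (C₀ : ℝ) (hC₀ : 1 ≤ C₀) :
    ∃ C > (0:ℝ), ∀ H h : ℝ → ℝ,
    (∀ t ∈ Set.Ioc (0:ℝ) 2, 0 ≤ H t ∧ 0 ≤ h t) →
    (∀ r ∈ Set.Ioc (0:ℝ) 1, ∀ t ∈ Set.Icc r (2*r), H t ≤ C₀ * H (2*r)) →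
    (∀ r ∈ Set.Ioc (0:ℝ) 1, ∀ t ∈ Set.Icc r (2*r), ∀ s ∈ Set.Icc r (2*r),
      |h t - h s| ≤ C₀ * H (2*r)) →
    (∀ x y : ℝ, 0 < x → x ≤ y → y ≤ 2 →
      IntervalIntegrable (fun s => H s / s) volume x y) →
    ∀ a ∈ Set.Ioc (0:ℝ) 2,
      h a + H a ≤ C * (H 2 + h 2 + ∫ s in a..2, H s / s) := by
  have hC0pos : (0:ℝ) < C₀ := by linarith
  have hL : (0:ℝ) < Real.log 2 := Real.log_pos (by norm_num)
  have hL1 : Real.log 2 ≤ 1 := by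
    nlinarith [Real.log_two_lt_d9]
  refine ⟨2 * C₀^2 / Real.log 2, by positivity, ?_⟩
  intro H h hpos hdbl hosc hInt
  have hH2 : 0 ≤ H 2 := (hpos 2 (by norm_num)).1
  have hh2 : 0 ≤ h 2 := (hpos 2 (by norm_num)).2
  -- nonnegativity of the integrals
  have hintnn : ∀ x : ℝ, 0 < x → x ≤ 2 → 0 ≤ ∫ s in x..2, H s / s := by
    intro x hx hx2
    apply intervalIntegral.integral_nonneg hx2
    intro u hu
    exact div_nonneg (hpos u ⟨lt_of_lt_of_le hx hu.1, hu.2⟩).1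
      (le_of_lt (lt_of_lt_of_le hx hu.1))
  -- key pointwise bound: for 0 < a ≤ 1, H a ≤ C₀ H s for s ∈ [a, 2a]
  have hHlow : ∀ a : ℝ, 0 < a → a ≤ 1 → ∀ s ∈ Set.Icc a (2*a), H a ≤ C₀ * H s := by
    intro a ha0 ha1 s hs
    have hs0 : 0 < s := lt_of_lt_of_le ha0 hs.1
    have key := hdbl (s/2) ⟨by linarith, by linarith [hs.2]⟩ a
      ⟨by linarith [hs.2], by linarith [hs.1]⟩
    have : 2 * (s/2) = s := by ring
    rwa [this] at key
  -- H a is controlled by the integral over [a, 2a]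
  have hHint : ∀ a : ℝ, 0 < a → a ≤ 1 →
      H a * Real.log 2 ≤ C₀ * ∫ s in a..2*a, H s / s := by
    intro a ha0 ha1
    have hle : a ≤ 2 * a := by linarith
    have int1 : IntervalIntegrable (fun s => (H a / C₀) / s) volume a (2*a) := by
      apply ContinuousOn.intervalIntegrable
      apply ContinuousOn.div continuousOn_const continuousOn_id
      intro x hx
      rw [Set.uIcc_of_le hle] at hx
      exact ne_of_gt (lt_of_lt_of_le ha0 hx.1)
    have int2 : IntervalIntegrable (fun s => H s / s) volume a (2*a) :=
      hInt a (2*a) ha0 hle (by linarith)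
    have hmono : (∫ s in a..2*a, (H a / C₀) / s) ≤ ∫ s in a..2*a, H s / s := by
      apply intervalIntegral.integral_mono_on hle int1 int2
      intro s hs
      have hs0 : 0 < s := lt_of_lt_of_le ha0 hs.1
      have h1 : H a ≤ C₀ * H s := hHlow a ha0 ha1 s hs
      have h2 : H a / C₀ ≤ H s := (div_le_iff₀ hC0pos).mpr (by linarith [mul_comm C₀ (H s)])
      exact div_le_div_of_nonneg_right h2 hs0.le |>.trans_eq rfl
    have hcalc : (∫ s in a..2*a, (H a / C₀) / s) = (H a / C₀) * Real.log 2 := by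
      have : (fun s : ℝ => (H a / C₀) / s) = fun s : ℝ => (H a / C₀) * (1/s) := by
        funext s; ring
      rw [this, intervalIntegral.integral_const_mul, integral_one_div]
      · congr 1
        rw [mul_div_assoc, div_self (ne_of_gt ha0), mul_one]
      · rw [Set.uIcc_of_le hle]
        intro hmem
        exact absurd hmem.1 (not_le.mpr ha0)
    rw [hcalc] at hmono
    have := mul_le_mul_of_nonneg_left hmono (le_of_lt hC0pos)
    calc H a * Real.log 2 = C₀ * (H a / C₀ * Real.log 2) := by
          field_simp
      _ ≤ C₀ * ∫ s in a..2*a, H s / s := this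
  -- base case: 1 < a ≤ 2
  have hbase : ∀ a : ℝ, 1 < a → a ≤ 2 →
      h a + C₀ * H a ≤ h 2 + 2*C₀^2 * H 2 + C₀^2 / Real.log 2 * ∫ s in a..2, H s / s := by
    intro a ha1 ha2
    have hmem : a ∈ Set.Icc (1:ℝ) (2*1) := ⟨le_of_lt ha1, by linarith⟩
    have hHa : H a ≤ C₀ * H 2 := by
      have := hdbl 1 (by norm_num) a hmem
      norm_num at this; exact this
    have hha : h a ≤ h 2 + C₀ * H 2 := by
      have := hosc 1 (by norm_num) a hmem 2 (by norm_num)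
      norm_num at this
      have := abs_sub_le_iff.mp this
      linarith [this.1]
    have hint := hintnn a (by linarith) ha2
    have hcoef : (0:ℝ) ≤ C₀^2 / Real.log 2 := by positivity
    nlinarith [mul_le_mul_of_nonneg_left hHa (le_of_lt hC0pos),
      mul_nonneg hcoef hint, mul_nonneg (le_of_lt hC0pos) hH2]
  -- induction on the number of doublings
  have key : ∀ n : ℕ, ∀ a : ℝ, 0 < a → a ≤ 2 → 1 < 2^n * a →
      h a + C₀ * H a ≤ h 2 + 2*C₀^2 * H 2 + C₀^2 / Real.log 2 * ∫ s in a..2, H s / s := by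
    intro n
    induction n with
    | zero =>
      intro a ha0 ha2 hgt
      rw [pow_zero, one_mul] at hgt
      exact hbase a hgt ha2
    | succ n ih =>
      intro a ha0 ha2 hgt
      by_cases h1 : 1 < a
      · exact hbase a h1 ha2
      · push_neg at h1
        have h2a0 : 0 < 2*a := by linarith
        have h2a2 : 2*a ≤ 2 := by linarith
        have hgt' : 1 < 2^n * (2*a) := by
          rw [pow_succ] at hgt; nlinarith [hgt]
        have IH := ih (2*a) h2a0 h2a2 hgt'
        -- oscillation bound
        have hha : h a ≤ h (2*a) + C₀ * H (2*a) := by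
          have := hosc a ⟨ha0, h1⟩ a ⟨le_refl a, by linarith⟩ (2*a) ⟨by linarith, le_refl _⟩
          have := abs_sub_le_iff.mp this
          linarith [this.1]
        -- integral bound for H a
        have hHa := hHint a ha0 h1
        -- integral additivity
        have int1 : IntervalIntegrable (fun s => H s / s) volume a (2*a) :=
          hInt a (2*a) ha0 (by linarith) h2a2
        have int2 : IntervalIntegrable (fun s => H s / s) volume (2*a) 2 :=
          hInt (2*a) 2 h2a0 h2a2 (le_refl 2)
        have hadd : (∫ s in a..2*a, H s / s) + (∫ s in (2*a)..2, H s / s)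
            = ∫ s in a..2, H s / s :=
          intervalIntegral.integral_add_adjacent_intervals int1 int2
        -- put it together
        have hCHa : C₀ * H a ≤ C₀^2 / Real.log 2 * ∫ s in a..2*a, H s / s := by
          rw [div_mul_eq_mul_div, le_div_iff₀ hL]
          nlinarith [hHa]
        have hH2a : 0 ≤ H (2*a) := (hpos (2*a) ⟨h2a0, h2a2⟩).1
        have hh2a : 0 ≤ h (2*a) := (hpos (2*a) ⟨h2a0, h2a2⟩).2
        have hexp : C₀ * H (2*a) ≤ C₀ * H (2*a) := le_refl _
        -- h a + C₀ H a ≤ h(2a) + C₀ H(2a) + C₀² /L ∫_a^{2a}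
        --             ≤ (IH rhs) + C₀²/L ∫_a^{2a}
        have step1 : h a + C₀ * H a ≤ h (2*a) + C₀ * H (2*a)
            + C₀^2 / Real.log 2 * ∫ s in a..2*a, H s / s := by linarith
        calc h a + C₀ * H a
            ≤ h (2*a) + C₀ * H (2*a) + C₀^2 / Real.log 2 * ∫ s in a..2*a, H s / s := step1
          _ ≤ (h 2 + 2*C₀^2 * H 2 + C₀^2 / Real.log 2 * ∫ s in (2*a)..2, H s / s)
              + C₀^2 / Real.log 2 * ∫ s in a..2*a, H s / s := by linarith
          _ = h 2 + 2*C₀^2 * H 2 + C₀^2 / Real.log 2 * ∫ s in a..2, H s / s := by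
              rw [← hadd]; ring
  -- conclude
  intro a ha
  obtain ⟨ha0, ha2⟩ := ha
  obtain ⟨n, hn⟩ := pow_unbounded_of_one_lt (1/a) (by norm_num : (1:ℝ) < 2)
  have hgt : 1 < 2^n * a := by
    rw [div_lt_iff₀ ha0] at hn
    linarith
  have hkey := key n a ha0 ha2 hgt
  have hHa : 0 ≤ H a := (hpos a ⟨ha0, ha2⟩).1
  have hint := hintnn a ha0 ha2
  have hC1 : (1:ℝ) ≤ 2 * C₀^2 / Real.log 2 := by
    rw [le_div_iff₀ hL]
    nlinarith
  have hC2 : 2*C₀^2 ≤ 2 * C₀^2 / Real.log 2 := by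
    rw [le_div_iff₀ hL]
    nlinarith
  have hC3 : C₀^2 / Real.log 2 ≤ 2 * C₀^2 / Real.log 2 := by
    apply div_le_div_of_nonneg_right ?_ hL.le |>.trans_eq rfl
    nlinarith
  nlinarith [mul_le_mul_of_nonneg_right hC3 hint, mul_le_mul_of_nonneg_right hC2 hH2,
    mul_le_mul_of_nonneg_right hC1 hh2]
end

section
/- Let δ ∈ (1,∞), h ∈ (0,1), C ≥ 1, and suppose g : [R/2, R] → [0,∞) is nondecreasing and satisfies, for all r, r' with R/2 ≤ r < r' ≤ R and r ≤ r' - 8: g(r) ≤ A/(h(r'-r)²) + (h + C/δ)g(r') + B, where A, B ≥ 0 and R ≥ 32. Fix an integer ℓ ≥ 1, set h = 2^{-2ℓ-2}, and assume δ ≥ 2^{2ℓ+2}C. Then there is a constant C_ℓ depending only on ℓ and C such that g(R/2) ≤ C_ℓ(A/R² + B) + C·R^{-2ℓ}·g(R). -/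
private lemma geom_aux (x : ℝ) (hx0 : 0 ≤ x) (hx : x ≤ 1/2) (k : ℕ) :
    ∑ i ∈ Finset.range k, x ^ i ≤ 2 := by
  induction k with
  | zero => simp
  | succ n ih =>
    rw [geom_sum_succ]
    nlinarith [mul_le_mul_of_nonneg_left ih hx0]

set_option maxHeartbeats 1000000 in
/-- Abstract iteration behind the Caccioppoli inequality for large `δ`.
With `h = 2^{-2ℓ-2}` and `δ ≥ 2^{2ℓ+2} C`, a nondecreasing nonnegative `g` on
`[R/2, R]` (`R ≥ 32`) satisfying
`g(r) ≤ A/(h (r'-r)²) + (h + C/δ) g(r') + B` for `R/2 ≤ r < r' ≤ R`, `r ≤ r' - 8`,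
satisfies `g(R/2) ≤ C_ℓ (A/R² + B) + C_ℓ R^{-2ℓ} g(R)` with `C_ℓ = C_ℓ(ℓ, C)`. -/
theorem statement12
    (C : ℝ) (hC : 1 ≤ C) (ℓ : ℕ) (hℓ : 1 ≤ ℓ) :
    ∃ Cℓ > (0:ℝ), ∀ (R A B δ : ℝ) (g : ℝ → ℝ),
    32 ≤ R → 0 ≤ A → 0 ≤ B → 1 < δ → (2:ℝ) ^ (2*ℓ+2) * C ≤ δ →
    MonotoneOn g (Set.Icc (R/2) R) →
    (∀ t ∈ Set.Icc (R/2) R, 0 ≤ g t) →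
    (∀ r r' : ℝ, R/2 ≤ r → r < r' → r' ≤ R → r ≤ r' - 8 →
      g r ≤ A / (((2:ℝ) ^ (2*ℓ+2))⁻¹ * (r' - r) ^ 2)
        + (((2:ℝ) ^ (2*ℓ+2))⁻¹ + C / δ) * g r' + B) →
    g (R/2) ≤ Cℓ * (A / R ^ 2 + B) + Cℓ * (R ^ (2*ℓ))⁻¹ * g R := by
  refine ⟨(2:ℝ) ^ (12*ℓ+8), by positivity, ?_⟩
  intro R A B δ g hR hA hB hδ1 hδ hmono hgpos hiter
  have hR0 : (0:ℝ) < R := by linarith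
  have hδ0 : (0:ℝ) < δ := by linarith
  set h : ℝ := ((2:ℝ) ^ (2*ℓ+2))⁻¹ with hh
  set θ : ℝ := h + C / δ with hθ
  have hpow0 : (0:ℝ) < (2:ℝ) ^ (2*ℓ+2) := by positivity
  have hh0 : 0 < h := by positivity
  have hθ0 : 0 < θ := by
    have : 0 < C / δ := by positivity
    simp only [hθ]; linarith
  have hCδ : C / δ ≤ h := by
    rw [hh, div_le_iff₀ hδ0, inv_mul_eq_div, le_div_iff₀ hpow0]
    linarith [hδ]
  have hθ2h : θ ≤ 2 * h := by simp only [hθ]; linarith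
  have h16 : (16:ℝ) ≤ (2:ℝ) ^ (2*ℓ+2) := by
    calc (16:ℝ) = 2 ^ 4 := by norm_num
    _ ≤ (2:ℝ) ^ (2*ℓ+2) := by
        apply pow_le_pow_right₀ (by norm_num); omega
  have hhsmall : h ≤ 1/16 := by
    rw [hh]
    rw [inv_le_comm₀ (by positivity) (by norm_num)]
    simpa using h16
  have h4θ : 4 * θ ≤ 1/2 := by linarith
  have hθsmall : θ ≤ 1/8 := by linarith
  -- the radii
  set r : ℕ → ℝ := fun i => R - R / 2 ^ (i+1) with hr
  have hr0 : r 0 = R / 2 := by simp [hr]; ring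
  have hrle : ∀ i, R / 2 ≤ r i ∧ r i ≤ R := by
    intro i
    have h1 : (0:ℝ) < (2:ℝ) ^ (i+1) := by positivity
    have h2 : (2:ℝ) ≤ (2:ℝ) ^ (i+1) := by
      calc (2:ℝ) = 2 ^ 1 := by norm_num
      _ ≤ (2:ℝ) ^ (i+1) := by apply pow_le_pow_right₀ (by norm_num); omega
    constructor
    · simp only [hr]
      have : R / 2 ^ (i+1) ≤ R / 2 := by
        apply div_le_div_of_nonneg_left (le_of_lt hR0) (by norm_num) h2
      linarith
    · simp only [hr]
      have : 0 < R / 2 ^ (i+1) := by positivity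
      linarith
  have hgap : ∀ i, r (i+1) - r i = R / 2 ^ (i+2) := by
    intro i
    simp only [hr]
    have h1 : ((2:ℝ) ^ (i+1)) ≠ 0 := by positivity
    have h2 : ((2:ℝ) ^ (i+2)) ≠ 0 := by positivity
    field_simp
    ring
  set E : ℝ := (2:ℝ) ^ (2*ℓ+6) with hE
  -- key iteration
  have key : ∀ k : ℕ, (2:ℝ) ^ (k+5) ≤ R →
      g (R/2) ≤ (∑ i ∈ Finset.range k, (A * E * (4*θ)^i / R^2 + B * θ^i))
        + θ^k * g (r k) := by
    intro k
    induction k with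
    | zero => intro _; simp [hr0]
    | succ n ih =>
      intro hRn
      have hstep : (2:ℝ) ^ (n+5) ≤ R := by
        have : (2:ℝ) ^ (n+5) ≤ (2:ℝ) ^ (n+1+5) := by
          apply pow_le_pow_right₀ (by norm_num); omega
        linarith
      have IH := ih hstep
      -- apply the iteration hypothesis from r n to r (n+1)
      have hgapval : r (n+1) - r n = R / 2 ^ (n+2) := hgap n
      have hgapbig : (16:ℝ) ≤ R / 2 ^ (n+2) := by
        rw [le_div_iff₀ (by positivity)]
        calc (16:ℝ) * 2 ^ (n+2) = 2 ^ (n+6) := by ring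
        _ = 2 ^ (n+1+5) := by ring_nf
        _ ≤ R := hRn
      have h8 : (8:ℝ) ≤ r (n+1) - r n := by
        rw [hgapval]; linarith [hgapbig]
      have hlt : r n < r (n+1) := by linarith
      have happ := hiter (r n) (r (n+1)) (hrle n).1 hlt (hrle (n+1)).2
        (by linarith)
      rw [hgapval] at happ
      -- rewrite the A-term
      have hterm : A / (h * (R / 2 ^ (n+2)) ^ 2) = A * E * 4^n / R^2 := by
        rw [hh, hE]
        have e1 : ((2:ℝ) ^ (n+2)) ≠ 0 := by positivity
        have e2 : ((2:ℝ) ^ (2*ℓ+2)) ≠ 0 := by positivity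
        have e3 : (2:ℝ) ^ (2*ℓ+6) = (2:ℝ) ^ (2*ℓ+2) * 2^4 := by
          rw [← pow_add]
        have e4 : ((2:ℝ) ^ (n+2))^2 = 4^n * 2^4 := by
          rw [← pow_mul]
          have : (n+2)*2 = 2*n + 4 := by ring
          rw [this, pow_add, pow_mul]
          norm_num
        field_simp
        rw [e3, e4]
        ring
      rw [hterm] at happ
      have hθk : (0:ℝ) ≤ θ^n := by positivity
      have hmul := mul_le_mul_of_nonneg_left happ hθk
      have hrw : θ^n * (A * E * 4^n / R^2 + θ * g (r (n+1)) + B)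
          = (A * E * (4*θ)^n / R^2 + B * θ^n) + θ^(n+1) * g (r (n+1)) := by
        rw [mul_pow]
        ring
      rw [hrw] at hmul
      calc g (R/2) ≤ (∑ i ∈ Finset.range n, (A * E * (4*θ)^i / R^2 + B * θ^i))
            + θ^n * g (r n) := IH
      _ ≤ (∑ i ∈ Finset.range n, (A * E * (4*θ)^i / R^2 + B * θ^i))
            + ((A * E * (4*θ)^n / R^2 + B * θ^n) + θ^(n+1) * g (r (n+1))) := by
          linarith [hmul]
      _ = (∑ i ∈ Finset.range (n+1), (A * E * (4*θ)^i / R^2 + B * θ^i))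
            + θ^(n+1) * g (r (n+1)) := by
          rw [Finset.sum_range_succ]; ring
  -- choose k
  obtain ⟨k, hk1, hk2⟩ := exists_nat_pow_near (x := R/32) (y := (2:ℝ))
    (by linarith) (by norm_num)
  have hRk : (2:ℝ) ^ (k+5) ≤ R := by
    have : (2:ℝ) ^ (k+5) = 2^k * 32 := by rw [pow_add]; norm_num
    rw [this]
    calc (2:ℝ)^k * 32 ≤ (R/32) * 32 := by linarith
    _ = R := by ring
  have hRk2 : R < (2:ℝ) ^ (k+6) := by
    have : (2:ℝ) ^ (k+6) = 2^(k+1) * 32 := by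
      rw [show k+6 = (k+1)+5 by omega, pow_add]; norm_num
    rw [this]
    calc R = (R/32) * 32 := by ring
    _ < 2^(k+1) * 32 := by linarith
  have hkey := key k hRk
  -- bound the sum
  have hsum : (∑ i ∈ Finset.range k, (A * E * (4*θ)^i / R^2 + B * θ^i))
      ≤ A * E / R^2 * 2 + B * 2 := by
    have e1 : ∀ i ∈ Finset.range k, A * E * (4*θ)^i / R^2 + B * θ^i
        = A * E / R^2 * (4*θ)^i + B * θ^i := by intro i _; ring
    rw [Finset.sum_congr rfl e1, Finset.sum_add_distrib, ← Finset.mul_sum,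
      ← Finset.mul_sum]
    have s1 : ∑ i ∈ Finset.range k, (4*θ)^i ≤ 2 :=
      geom_aux _ (by positivity) h4θ k
    have s2 : ∑ i ∈ Finset.range k, θ^i ≤ 2 :=
      geom_aux _ (le_of_lt hθ0) (by linarith) k
    have p1 : (0:ℝ) ≤ A * E / R^2 := by positivity
    have := mul_le_mul_of_nonneg_left s1 p1
    have := mul_le_mul_of_nonneg_left s2 hB
    linarith
  -- bound θ^k ≤ 2^(12ℓ) / R^(2ℓ)
  have hθk : θ^k ≤ (2:ℝ)^(12*ℓ) * (R^(2*ℓ))⁻¹ := by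
    have h2h : 2 * h = ((2:ℝ)^(2*ℓ+1))⁻¹ := by
      rw [hh, show 2*ℓ+2 = (2*ℓ+1)+1 by omega, pow_succ, mul_inv]
      ring
    have hθle : θ ≤ ((2:ℝ)^(2*ℓ+1))⁻¹ := by rw [← h2h]; linarith
    have hb1 : θ^k ≤ ((2:ℝ)^((2*ℓ+1)*k))⁻¹ := by
      calc θ^k ≤ (((2:ℝ)^(2*ℓ+1))⁻¹)^k := pow_le_pow_left₀ (le_of_lt hθ0) hθle k
      _ = ((2:ℝ)^((2*ℓ+1)*k))⁻¹ := by rw [inv_pow, ← pow_mul]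
    have hb2 : R^(2*ℓ) ≤ (2:ℝ)^((k+6)*(2*ℓ)) := by
      calc R^(2*ℓ) ≤ ((2:ℝ)^(k+6))^(2*ℓ) :=
            pow_le_pow_left₀ (le_of_lt hR0) (le_of_lt hRk2) _
      _ = (2:ℝ)^((k+6)*(2*ℓ)) := by rw [← pow_mul]
    have hRp : (0:ℝ) < R^(2*ℓ) := by positivity
    have hmain : θ^k * R^(2*ℓ) ≤ (2:ℝ)^(12*ℓ) := by
      have hb3 : θ^k * R^(2*ℓ) ≤ ((2:ℝ)^((2*ℓ+1)*k))⁻¹ * (2:ℝ)^((k+6)*(2*ℓ)) := by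
        apply mul_le_mul hb1 hb2 (le_of_lt hRp) (by positivity)
      have hb4 : ((2:ℝ)^((2*ℓ+1)*k))⁻¹ * (2:ℝ)^((k+6)*(2*ℓ)) ≤ (2:ℝ)^(12*ℓ) := by
        rw [inv_mul_le_iff₀ (by positivity), ← pow_add]
        apply pow_le_pow_right₀ (by norm_num)
        ring_nf
        omega
      linarith
    calc θ^k = θ^k * R^(2*ℓ) * (R^(2*ℓ))⁻¹ := by field_simp
    _ ≤ (2:ℝ)^(12*ℓ) * (R^(2*ℓ))⁻¹ :=
        mul_le_mul_of_nonneg_right hmain (by positivity)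
  -- final assembly
  have hmonoRk : g (r k) ≤ g R :=
    hmono ⟨(hrle k).1, (hrle k).2⟩ ⟨by linarith, le_rfl⟩ (hrle k).2
  have hgR : 0 ≤ g R := hgpos R ⟨by linarith, le_rfl⟩
  have hθkpos : (0:ℝ) ≤ θ^k := by positivity
  have t1 : θ^k * g (r k) ≤ θ^k * g R := mul_le_mul_of_nonneg_left hmonoRk hθkpos
  have t2 : θ^k * g R ≤ (2:ℝ)^(12*ℓ) * (R^(2*ℓ))⁻¹ * g R :=
    mul_le_mul_of_nonneg_right hθk hgR
  have hpowle : (2:ℝ)^(12*ℓ) ≤ (2:ℝ)^(12*ℓ+8) := by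
    apply pow_le_pow_right₀ (by norm_num); omega
  have t3 : (2:ℝ)^(12*ℓ) * (R^(2*ℓ))⁻¹ * g R ≤ (2:ℝ)^(12*ℓ+8) * (R^(2*ℓ))⁻¹ * g R := by
    apply mul_le_mul_of_nonneg_right _ hgR
    apply mul_le_mul_of_nonneg_right hpowle (by positivity)
  have hE2 : E * 2 ≤ (2:ℝ)^(12*ℓ+8) := by
    rw [hE]
    calc (2:ℝ)^(2*ℓ+6) * 2 = (2:ℝ)^(2*ℓ+7) := by rw [← pow_succ]
    _ ≤ (2:ℝ)^(12*ℓ+8) := by apply pow_le_pow_right₀ (by norm_num); omega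
  have hAR : (0:ℝ) ≤ A / R^2 := by positivity
  have t4 : A * E / R^2 * 2 ≤ (2:ℝ)^(12*ℓ+8) * (A / R^2) := by
    have : A * E / R^2 * 2 = (A / R^2) * (E * 2) := by ring
    rw [this]
    calc (A / R^2) * (E * 2) ≤ (A / R^2) * (2:ℝ)^(12*ℓ+8) :=
          mul_le_mul_of_nonneg_left hE2 hAR
    _ = (2:ℝ)^(12*ℓ+8) * (A / R^2) := by ring
  have t5 : B * 2 ≤ (2:ℝ)^(12*ℓ+8) * B := by
    have h2le : (2:ℝ) ≤ (2:ℝ)^(12*ℓ+8) := by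
      calc (2:ℝ) = 2^1 := by norm_num
      _ ≤ (2:ℝ)^(12*ℓ+8) := by apply pow_le_pow_right₀ (by norm_num); omega
    nlinarith
  have hexp : (2:ℝ)^(12*ℓ+8) * (A / R^2 + B)
      = (2:ℝ)^(12*ℓ+8) * (A / R^2) + (2:ℝ)^(12*ℓ+8) * B := by ring
  linarith only [hkey, hsum, t1, t2, t3, t4, t5, hexp]
end
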